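/- (Theorem 4, Property 7) Let C be an initial configuration of the BRP in which every stack is nonempty. Let V₁ (upper) and V₂ (lower) be virtual layers of C such that V₁ ∩ V₂ = {b*} for a single block b* that is well placed in C, in every stack other than the stack of b* the V₁-block lies strictly above the V₂-block, both V₁ and V₂ satisfy the conditions of Property 5, and the label of b* equals the maximum over all stacks s of the minimum label present in stack s after deleting all blocks strictly above the V₁-block of s. Then every feasible move sequence for C either contains at least 2 non-BG relocations of blocks of V₁ ∪ V₂, or contains at least one GB relocation of b* and at least one BG relocation of b*. -/

import Mathlib

/-- A configuration of the BRP: each stack holds a list of blocks, bottom to top. -/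
abbrev Config (B S : ℕ) := Fin S → List (Fin B)

/-- Every block occurs exactly once among the stacks. -/
def IsConfig {B S : ℕ} (C : Config B S) : Prop :=
  ∀ b : Fin B, (∑ s : Fin S, (C s).count b) = 1

/-- `a` lies strictly below `b` in stack `s` of `C`. -/
def StrictlyBelow {B S : ℕ} (C : Config B S) (s : Fin S) (a b : Fin B) : Prop :=
  ∃ i j : ℕ, i < j ∧ (C s)[i]? = some a ∧ (C s)[j]? = some b

/-- A block is badly placed if some smaller-labelled block lies below it in its stack. -/
def BadlyPlaced {B S : ℕ} (C : Config B S) (b : Fin B) : Prop :=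
  ∃ s a, a < b ∧ StrictlyBelow C s a b

/-- Moves: retrieve the top block of a stack, or relocate the top block of one
stack onto another stack. -/
inductive Move (S : ℕ) where
  | retrieve (s : Fin S)
  | relocate (src dst : Fin S)

def applyMove {B S : ℕ} (C : Config B S) : Move S → Config B S
  | .retrieve s => Function.update C s (C s).dropLast
  | .relocate src dst =>
    match (C src).getLast? with
    | some b =>
      let C' := Function.update C src (C src).dropLast
      Function.update C' dst (C' dst ++ [b])
    | none => C

def Enabled {B S : ℕ} (C : Config B S) : Move S → Prop
  | .retrieve s => ∃ b, (C s).getLast? = some b ∧ ∀ (s' : Fin S), ∀ b' ∈ C s', b ≤ b'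
  | .relocate src dst => src ≠ dst ∧ C src ≠ []

def play {B S : ℕ} (C : Config B S) : List (Move S) → Config B S
  | [] => C
  | m :: ms => play (applyMove C m) ms

def AllEnabled {B S : ℕ} (C : Config B S) : List (Move S) → Prop
  | [] => True
  | m :: ms => Enabled C m ∧ AllEnabled (applyMove C m) ms

/-- A feasible move sequence: every move is enabled and at the end all blocks
have been retrieved. -/
def Feasible {B S : ℕ} (C : Config B S) (ms : List (Move S)) : Prop :=
  AllEnabled C ms ∧ ∀ s, play C ms s = []

/-- `b` is the block moved by `m` (a relocation) performed in configuration `C`. -/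
def MovedBlock {B S : ℕ} (C : Config B S) (m : Move S) (b : Fin B) : Prop :=
  ∃ src dst, m = .relocate src dst ∧ src ≠ dst ∧ (C src).getLast? = some b

/-- The four types of relocation moves. -/
inductive MType where
  | BB | BG | GB | GG

/-- The relocation `m`, moving block `b` from configuration `C`, has the given type. -/
def MTypeOf {B S : ℕ} (C : Config B S) (m : Move S) (b : Fin B) : MType → Prop
  | .BB => BadlyPlaced C b ∧ BadlyPlaced (applyMove C m) b
  | .BG => BadlyPlaced C b ∧ ¬ BadlyPlaced (applyMove C m) b
  | .GB => ¬ BadlyPlaced C b ∧ BadlyPlaced (applyMove C m) b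
  | .GG => ¬ BadlyPlaced C b ∧ ¬ BadlyPlaced (applyMove C m) b

/-- `m` is a relocation of a block of `𝔅`. -/
def RelocIn {B S : ℕ} (𝔅 : Set (Fin B)) (C : Config B S) (m : Move S) : Prop :=
  ∃ b ∈ 𝔅, MovedBlock C m b

/-- `m` is a relocation of a block of `𝔅` of type `mt`. -/
def RelocTypeIn {B S : ℕ} (mt : MType) (𝔅 : Set (Fin B)) (C : Config B S) (m : Move S) : Prop :=
  ∃ b ∈ 𝔅, MovedBlock C m b ∧ MTypeOf C m b mt

/-- `m` is a non-BG relocation of a block of `𝔅`. -/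
def RelocNonBGIn {B S : ℕ} (𝔅 : Set (Fin B)) (C : Config B S) (m : Move S) : Prop :=
  ∃ b ∈ 𝔅, MovedBlock C m b ∧ ¬ MTypeOf C m b MType.BG

/-- Count the moves of a sequence satisfying `P` (evaluated in the configuration
in which each move is performed). -/
noncomputable def countMoves {B S : ℕ} (P : Config B S → Move S → Prop) :
    Config B S → List (Move S) → ℕ
  | _, [] => 0
  | C, m :: ms =>
    (@ite ℕ (P C m) (Classical.propDecidable _) 1 0) + countMoves P (applyMove C m) ms

/-- Minimum over feasible move sequences of the number of moves satisfying `P`. -/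
noncomputable def fMin {B S : ℕ} (C : Config B S) (P : Config B S → Move S → Prop) : ℕ :=
  sInf { n | ∃ ms, Feasible C ms ∧ countMoves P C ms = n }

/-- `f(𝔅)`: least number of relocations applied to blocks of `𝔅`. -/
noncomputable def fRel {B S : ℕ} (C : Config B S) (𝔅 : Set (Fin B)) : ℕ :=
  fMin C (RelocIn 𝔅)

/-- `f_mt(𝔅)`: least number of type-`mt` relocations applied to blocks of `𝔅`. -/
noncomputable def fTyp {B S : ℕ} (C : Config B S) (mt : MType) (𝔅 : Set (Fin B)) : ℕ :=
  fMin C (RelocTypeIn mt 𝔅)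

/-- `f_nonBG(𝔅)`: least number of non-BG relocations applied to blocks of `𝔅`. -/
noncomputable def fNonBG {B S : ℕ} (C : Config B S) (𝔅 : Set (Fin B)) : ℕ :=
  fMin C (RelocNonBGIn 𝔅)

/-- The top 1st layer: the topmost block of each stack. -/
def TopLayer {B S : ℕ} (C : Config B S) : Set (Fin B) :=
  {b | ∃ s, (C s).getLast? = some b}

/-- The top `k` layers: the topmost `k` blocks of every stack. -/
def TopK {B S : ℕ} (C : Config B S) (k : ℕ) : Set (Fin B) :=
  {b | ∃ s, b ∈ (C s).drop ((C s).length - k)}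

/-- The top `j`-th layer: the `j`-th block from the top of every stack. -/
def TopJth {B S : ℕ} (C : Config B S) (j : ℕ) : Set (Fin B) :=
  {b | ∃ s, (C s)[(C s).length - j]? = some b}

/-- A virtual layer: a set of blocks containing exactly one block from each stack. -/
def VirtualLayer {B S : ℕ} (C : Config B S) (V : Set (Fin B)) : Prop :=
  ∀ s : Fin S, ∃! b : Fin B, b ∈ V ∧ b ∈ C s

/-- `a` lies at or below the `V`-block of stack `s`. -/
def AtOrBelowLayer {B S : ℕ} (C : Config B S) (V : Set (Fin B)) (s : Fin S) (a : Fin B) : Prop :=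
  ∃ b j, b ∈ V ∧ (C s)[j]? = some b ∧ a ∈ (C s).take (j + 1)

/-- `V` is a virtual layer satisfying the conditions of Property 5:
(1) in some stack, a block strictly below the `V`-block of that stack has a smaller
label than every block of `V`; (2) every badly placed block of `V` has a label
strictly greater than the minimum label present in stack `s` after deleting all
blocks strictly above the `V`-block of `s`, for every stack `s`. -/
def P5 {B S : ℕ} (C : Config B S) (V : Set (Fin B)) : Prop :=
  VirtualLayer C V ∧
  (∃ s a b, b ∈ V ∧ StrictlyBelow C s a b ∧ ∀ c ∈ V, a < c) ∧
  (∀ b ∈ V, BadlyPlaced C b → ∀ s : Fin S, ∃ a, AtOrBelowLayer C V s a ∧ a < b)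

/-- A pair of virtual layers `V₁` (upper), `V₂` (lower) with shared well-placed
block `bstar` satisfying the conditions of Property 7. -/
def P7 {B S : ℕ} (C : Config B S) (V₁ V₂ : Set (Fin B)) (bstar : Fin B) : Prop :=
  V₁ ∩ V₂ = {bstar} ∧
  ¬ BadlyPlaced C bstar ∧
  (∀ s : Fin S, bstar ∉ C s →
    ∃ b₁ b₂, b₁ ∈ V₁ ∧ b₂ ∈ V₂ ∧ StrictlyBelow C s b₂ b₁) ∧
  P5 C V₁ ∧ P5 C V₂ ∧
  (∀ s : Fin S, ∃ a, AtOrBelowLayer C V₁ s a ∧ a ≤ bstar) ∧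
  (∃ s : Fin S, ∀ a, AtOrBelowLayer C V₁ s a → bstar ≤ a)

/-- Push blocks one by one onto the indicated stacks. -/
def pushAll {B S : ℕ} (C : Config B S) : List (Fin B × Fin S) → Config B S
  | [] => C
  | p :: rest => pushAll (Function.update C p.2 (C p.2 ++ [p.1])) rest

/-- The blocks lying strictly above position `i` of stack `s`, listed from the
top of the stack downward (the processing order of the experiment). -/
def aboveList {B S : ℕ} (C : Config B S) (s : Fin S) (i : ℕ) : List (Fin B) :=
  ((C s).drop (i + 1)).reverse

/-- The arrangement resulting from the experiment of Property 4: the blocks above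
position `i` of stack `s` are relocated exactly once, from the top downward, onto
the stacks listed in `ds`. -/
def expResult {B S : ℕ} (C : Config B S) (s : Fin S) (i : ℕ) (ds : List (Fin S)) :
    Config B S :=
  pushAll (Function.update C s ((C s).take (i + 1))) ((aboveList C s i).zip ds)

/-- The condition of Property 4 (target block at position `i` of stack `sStar`):
in every experiment, some relocated block ends badly placed. -/
def P4Cond {B S : ℕ} (C : Config B S) (sStar : Fin S) (i : ℕ) : Prop :=
  ∀ ds : List (Fin S), ds.length = (aboveList C sStar i).length →
    (∀ d ∈ ds, d ≠ sStar) →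
    ∃ b ∈ aboveList C sStar i, BadlyPlaced (expResult C sStar i ds) b

/-- The set `𝔅⁴`: the blocks above the target block together with, for each
nonempty stack other than the target's stack, its block of minimum label. -/
def B4Set {B S : ℕ} (C : Config B S) (sStar : Fin S) (i : ℕ) : Set (Fin B) :=
  {b | b ∈ aboveList C sStar i} ∪
  {b | ∃ s, s ≠ sStar ∧ b ∈ C s ∧ ∀ b' ∈ C s, b ≤ b'}

/-- The number of direct blockages: adjacent pairs in a stack whose upper block
has a strictly larger label. -/
def directBlockages {B S : ℕ} (C : Config B S) : ℕ :=
  ∑ s : Fin S, (((C s).zip (C s).tail).filter (fun p => decide (p.1 < p.2))).length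

/-- The number of relocations in a move sequence. -/
def relocCount {S : ℕ} (ms : List (Move S)) : ℕ :=
  (ms.filter (fun m => match m with | Move.relocate _ _ => true | Move.retrieve _ => false)).length

/-- The minimum number of relocations over all feasible move sequences. -/
noncomputable def fAll {B S : ℕ} (C : Config B S) : ℕ :=
  sInf { n | ∃ ms, Feasible C ms ∧ relocCount ms = n }

/-- `g(L)`: `L` plus the minimum number of direct blockages over all partial
plans with exactly `L` relocations. -/
noncomputable def gIter {B S : ℕ} (C : Config B S) (L : ℕ) : ℕ :=
  L + sInf { d | ∃ ms : List (Move S), AllEnabled C ms ∧ relocCount ms = L ∧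
      d = directBlockages (play C ms) }

/-! As long as no block of a layer `V` satisfying Property 5 has been relocated, every stack is
intact up to its `V`-block: retrievals cannot reach it, because condition (1) keeps a block
smaller than all of `V` among the stacks, which also forces some `V`-block to be relocated
eventually. At that first relocation the moved block is badly placed only if it was so initially,
and then condition (2) makes it land on a smaller block, so the move is not BG.

Apply this to the first relocation of a block of `V₁ ∪ V₂`. A block of only one layer gives one
non-BG move and leaves the other layer intact, which yields a second one. If it is `b*`, it is
well placed, and every other stack holds, up to its `V₁`-block, a block smaller than `b*`, so the
move is GB; afterwards `b*` is badly placed and needs a BG move before it can be retrieved. -/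

variable {B S : ℕ}

open List

theorem List.IsPrefix.prefix_dropLast {α : Type*} {p l : List α} (h : p <+: l) (hne : p ≠ l) :
    p <+: l.dropLast := by
  cases hl : l.getLast? with
  | none => simp_all
  | some x =>
    rw [← dropLast_append_getLast? x hl, prefix_concat_iff] at h
    exact h.resolve_left (by rwa [dropLast_append_getLast? x hl])

theorem List.mem_take_of_getElem? {α : Type*} {l : List α} {i n : ℕ} {a : α}
    (h : l[i]? = some a) (hi : i < n) : a ∈ l.take n :=
  mem_of_getElem? (i := i) (by rwa [getElem?_take, if_pos hi])

def Move.source : Move S → Fin S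
  | .retrieve s => s
  | .relocate src _ => src

lemma applyMove_relocate {D : Config B S} {src dst : Fin S} {v : Fin B}
    (hv : (D src).getLast? = some v) (hne : src ≠ dst) (s : Fin S) :
    applyMove D (.relocate src dst) s =
      if s = dst then D dst ++ [v] else if s = src then (D src).dropLast else D s := by
  simp only [applyMove, hv]
  split_ifs with h₁ h₂
  · subst h₁; simp [Function.update_of_ne (Ne.symm hne)]
  · subst h₂; simp [h₁]
  · simp [h₁, h₂]

lemma applyMove_relocate_of_getLast?_eq_none {D : Config B S} {src dst : Fin S}
    (hv : (D src).getLast? = none) : applyMove D (.relocate src dst) = D := by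
  simp [applyMove, hv]

lemma prefix_applyMove_of_source_ne (D : Config B S) {m : Move S} {s : Fin S}
    (h : m.source ≠ s) : D s <+: applyMove D m s := by
  cases m with
  | retrieve t => simp [applyMove, Function.update_of_ne (Ne.symm h : s ≠ t)]
  | relocate src dst =>
    cases hv : (D src).getLast? with
    | none => simp [applyMove_relocate_of_getLast?_eq_none hv]
    | some v =>
      simp only [applyMove, hv, Function.update_apply]
      split_ifs <;> simp_all [Move.source]

lemma dropLast_prefix_applyMove (D : Config B S) (m : Move S) (s : Fin S) :
    (D s).dropLast <+: applyMove D m s := by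
  by_cases h : m.source = s
  · cases m with
    | retrieve t => subst h; simp [applyMove, Move.source]
    | relocate src dst =>
      cases hv : (D src).getLast? with
      | none => simp [applyMove_relocate_of_getLast?_eq_none hv, dropLast_prefix]
      | some v =>
        simp only [applyMove, hv, Function.update_apply]
        split_ifs <;> simp_all [Move.source, dropLast_append_getLast? v hv, dropLast_prefix]
  · exact (dropLast_prefix _).trans (prefix_applyMove_of_source_ne D h)

/-- An enabled move that does not relocate the top block of its source stack retrieves it, so
that block is the smallest one present. -/
lemma Enabled.top_le_of_not_movedBlock {D : Config B S} {m : Move S} {v : Fin B}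
    (hE : Enabled D m) (hv : (D m.source).getLast? = some v) (hnm : ¬ MovedBlock D m v)
    {s : Fin S} {b : Fin B} (hb : b ∈ D s) : v ≤ b := by
  cases m with
  | retrieve t =>
    obtain ⟨u, hu, hmin⟩ := hE
    obtain rfl : u = v := Option.some_inj.mp (hu.symm.trans hv)
    exact hmin s b hb
  | relocate src dst => exact absurd ⟨src, dst, rfl, hE.1, hv⟩ hnm

def AtMostOnce (D : Config B S) : Prop :=
  ∀ b : Fin B, ∑ s : Fin S, (D s).count b ≤ 1

lemma IsConfig.atMostOnce {C : Config B S} (hC : IsConfig C) : AtMostOnce C :=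
  fun b => (hC b).le

lemma sum_count_update_add (D : Config B S) (t : Fin S) (l : List (Fin B)) (b : Fin B) :
    ∑ s, (Function.update D t l s).count b + (D t).count b = ∑ s, (D s).count b + l.count b := by
  simp only [Function.apply_update (fun _ l => List.count b l),
    Finset.sum_update_of_mem (Finset.mem_univ t)]
  rw [← Finset.sum_erase_add _ _ (Finset.mem_univ t), Finset.sdiff_singleton_eq_erase]
  ring

lemma sum_count_applyMove_le (D : Config B S) (m : Move S) (b : Fin B) :
    ∑ s, (applyMove D m s).count b ≤ ∑ s, (D s).count b := by
  cases m with
  | retrieve t =>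
    have := sum_count_update_add D t (D t).dropLast b
    have := (dropLast_sublist (D t)).count_le b
    simp only [applyMove]
    omega
  | relocate src dst =>
    cases hv : (D src).getLast? with
    | none => simp [applyMove_relocate_of_getLast?_eq_none hv]
    | some v =>
      simp only [applyMove, hv]
      have h₁ := sum_count_update_add D src (D src).dropLast b
      set D' := Function.update D src (D src).dropLast
      have h₂ := sum_count_update_add D' dst (D' dst ++ [v]) b
      have h₃ : (D src).count b = (D src).dropLast.count b + [v].count b := by
        rw [← count_append, dropLast_append_getLast? v hv]
      simp only [count_append] at h₂
      omega

lemma AtMostOnce.applyMove {D : Config B S} (hD : AtMostOnce D) (m : Move S) :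
    AtMostOnce (applyMove D m) :=
  fun b => (sum_count_applyMove_le D m b).trans (hD b)

lemma AtMostOnce.count_le_one {D : Config B S} (hD : AtMostOnce D) (s : Fin S) (b : Fin B) :
    (D s).count b ≤ 1 :=
  (Finset.single_le_sum (fun _ _ => Nat.zero_le _) (Finset.mem_univ s)).trans (hD b)

lemma AtMostOnce.nodup {D : Config B S} (hD : AtMostOnce D) (s : Fin S) : (D s).Nodup :=
  nodup_iff_count_le_one.mpr (hD.count_le_one s)

lemma AtMostOnce.eq_of_mem {D : Config B S} (hD : AtMostOnce D) {b : Fin B} {s s' : Fin S}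
    (hs : b ∈ D s) (hs' : b ∈ D s') : s = s' := by
  by_contra hne
  have := (Finset.sum_pair hne (f := fun x => (D x).count b)).symm.le.trans
    (Finset.sum_le_sum_of_subset (Finset.subset_univ _))
  have := count_pos_iff.mpr hs
  have := count_pos_iff.mpr hs'
  have := hD b
  omega

lemma IsConfig.exists_mem {C : Config B S} (hC : IsConfig C) (b : Fin B) : ∃ s, b ∈ C s := by
  by_contra! h
  have := hC b
  simp [count_eq_zero_of_not_mem (h _)] at this

lemma MovedBlock.unique {D : Config B S} {m : Move S} {u v : Fin B}
    (hu : MovedBlock D m u) (hv : MovedBlock D m v) : u = v := by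
  obtain ⟨src, dst, rfl, -, hu⟩ := hu
  obtain ⟨_, _, ⟨⟩, -, hv⟩ := hv
  exact Option.some_inj.mp (hu.symm.trans hv)

lemma StrictlyBelow.left_mem {D : Config B S} {s : Fin S} {a b : Fin B}
    (h : StrictlyBelow D s a b) : a ∈ D s :=
  let ⟨_, _, _, ha, _⟩ := h; mem_of_getElem? ha

lemma StrictlyBelow.right_mem {D : Config B S} {s : Fin S} {a b : Fin B}
    (h : StrictlyBelow D s a b) : b ∈ D s :=
  let ⟨_, _, _, _, hb⟩ := h; mem_of_getElem? hb

lemma StrictlyBelow.of_prefix {D D' : Config B S} {s s' : Fin S} {a b : Fin B}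
    {p : List (Fin B)} (h : StrictlyBelow D s a b) (hnd : (D s).Nodup) (hb : b ∈ p)
    (hp : p <+: D s) (hp' : p <+: D' s') : StrictlyBelow D' s' a b := by
  obtain ⟨i, k, hik, hi, hk⟩ := h
  obtain ⟨t, ht⟩ := hp
  obtain ⟨t', ht'⟩ := hp'
  rw [← ht] at hi hk hnd
  have hk_lt : k < p.length := by
    by_contra! hle
    rw [getElem?_append_right hle] at hk
    exact (nodup_append.mp hnd).2.2 b hb b (mem_of_getElem? hk) rfl
  refine ⟨i, k, hik, ?_, ?_⟩
  · rwa [← ht', getElem?_append_left (by omega), ← getElem?_append_left (l₂ := t) (by omega)]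
  · rwa [← ht', getElem?_append_left hk_lt, ← getElem?_append_left (l₂ := t) hk_lt]

lemma badlyPlaced_relocate {D : Config B S} {src dst : Fin S} {v a : Fin B}
    (hv : (D src).getLast? = some v) (hne : src ≠ dst) (ha : a ∈ D dst) (hav : a < v) :
    BadlyPlaced (applyMove D (.relocate src dst)) v := by
  obtain ⟨i, hi⟩ := mem_iff_getElem?.mp ha
  have hlen : i < (D dst).length := (List.getElem?_eq_some_iff.mp hi).1
  refine ⟨dst, a, hav, i, (D dst).length, hlen, ?_, ?_⟩ <;>
    simp [applyMove_relocate hv hne, getElem?_append_left hlen, hi]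

lemma BadlyPlaced.applyMove {D : Config B S} {m : Move S} {v : Fin B}
    (hbp : BadlyPlaced D v) (hD : AtMostOnce D) (hE : Enabled D m)
    (hnm : ¬ MovedBlock D m v) : BadlyPlaced (applyMove D m) v := by
  obtain ⟨s, a, hav, hbelow⟩ := hbp
  refine ⟨s, a, hav, ?_⟩
  by_cases hsrc : m.source = s
  · subst hsrc
    have htop : v ≠ (D m.source).getLast? := fun htop =>
      (hE.top_le_of_not_movedBlock htop.symm hnm hbelow.left_mem).not_gt hav
    exact hbelow.of_prefix (hD.nodup _) (mem_dropLast_of_mem_of_ne_getLast? hbelow.right_mem htop)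
      (dropLast_prefix _) (dropLast_prefix_applyMove D m _)
  · exact hbelow.of_prefix (hD.nodup s) hbelow.right_mem prefix_rfl
      (prefix_applyMove_of_source_ne D hsrc)

def LayerIntact (C : Config B S) (V : Set (Fin B)) (D : Config B S) : Prop :=
  ∀ s j w, w ∈ V → (C s)[j]? = some w → (C s).take (j + 1) <+: D s

section LayerIntact

variable {C D : Config B S} {V : Set (Fin B)}

lemma layerIntact_self (C : Config B S) (V : Set (Fin B)) : LayerIntact C V C :=
  fun _ _ _ _ _ => take_prefix _ _

lemma LayerIntact.mem_of_atOrBelowLayer (h : LayerIntact C V D) {s : Fin S} {a : Fin B}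
    (ha : AtOrBelowLayer C V s a) : a ∈ D s :=
  let ⟨w, j, hw, hj, ha⟩ := ha; (h s j w hw hj).mem ha

lemma LayerIntact.exists_lt (hV : P5 C V) (h : LayerIntact C V D) :
    ∃ s a, a ∈ D s ∧ ∀ c ∈ V, a < c := by
  obtain ⟨s, a, b, hb, ⟨i, j, hij, hi, hj⟩, hlt⟩ := hV.2.1
  exact ⟨s, a, (h s j b hb hj).mem (mem_take_of_getElem? hi (by omega)), hlt⟩

lemma LayerIntact.exists_ne_nil (hV : P5 C V) (h : LayerIntact C V D) : ∃ s, D s ≠ [] :=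
  let ⟨s, _, ha, _⟩ := h.exists_lt hV; ⟨s, ne_nil_of_mem ha⟩

/-- A `V`-block is never the smallest block present, so it can only leave its place by being
relocated. -/
lemma LayerIntact.applyMove (hV : P5 C V) (h : LayerIntact C V D) {m : Move S}
    (hE : Enabled D m) (hnm : ¬ RelocIn V D m) : LayerIntact C V (applyMove D m) := by
  intro s j w hw hj
  have hp := h s j w hw hj
  by_cases hsrc : m.source = s
  · subst hsrc
    have hne : (C m.source).take (j + 1) ≠ D m.source := by
      intro heq
      have htop : (D m.source).getLast? = some w := by
        rw [← heq, getLast?_take]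
        simp [hj]
      obtain ⟨s', a, ha, hlt⟩ := h.exists_lt hV
      exact (hE.top_le_of_not_movedBlock htop (fun hmv => hnm ⟨w, hw, hmv⟩) ha).not_gt (hlt w hw)
    exact (hp.prefix_dropLast hne).trans (dropLast_prefix_applyMove D m _)
  · exact hp.trans (prefix_applyMove_of_source_ne D hsrc)

lemma LayerIntact.badlyPlaced (hC : IsConfig C) (h : LayerIntact C V D) (hD : AtMostOnce D)
    {v : Fin B} (hv : v ∈ V) (hbp : BadlyPlaced D v) : BadlyPlaced C v := by
  obtain ⟨s, a, hav, hbelow⟩ := hbp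
  obtain ⟨d, hd⟩ := hC.exists_mem v
  obtain ⟨j, hj⟩ := mem_iff_getElem?.mp hd
  have hvp : v ∈ (C d).take (j + 1) := mem_take_of_getElem? hj (by omega)
  have hp := h d j v hv hj
  obtain rfl : s = d := hD.eq_of_mem hbelow.right_mem (hp.mem hvp)
  exact ⟨s, a, hav, hbelow.of_prefix (hD.nodup s) hvp hp (take_prefix _ _)⟩

/-- By condition (2) of Property 5, a badly placed block of `V` lands on a smaller block. -/
lemma LayerIntact.not_mTypeOf_BG (hC : IsConfig C) (hV : P5 C V) (h : LayerIntact C V D)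
    (hD : AtMostOnce D) {m : Move S} {v : Fin B} (hv : v ∈ V) (hm : MovedBlock D m v) :
    ¬ MTypeOf D m v .BG := by
  obtain ⟨src, dst, rfl, hne, htop⟩ := hm
  rintro ⟨hbp, hwp⟩
  obtain ⟨a, ha, hav⟩ := hV.2.2 v hv (h.badlyPlaced hC hD hv hbp) dst
  exact hwp (badlyPlaced_relocate htop hne (h.mem_of_atOrBelowLayer ha) hav)

lemma LayerIntact.mTypeOf_GB (hC : IsConfig C) (h : LayerIntact C V D) (hD : AtMostOnce D)
    {m : Move S} {b : Fin B} (hb : b ∈ V) (hwp : ¬ BadlyPlaced C b)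
    (hbound : ∀ s, ∃ a, AtOrBelowLayer C V s a ∧ a ≤ b) (hm : MovedBlock D m b) :
    MTypeOf D m b .GB := by
  obtain ⟨src, dst, rfl, hne, htop⟩ := hm
  refine ⟨fun hbp => hwp (h.badlyPlaced hC hD hb hbp), ?_⟩
  obtain ⟨a, ha, hab⟩ := hbound dst
  have ha' := h.mem_of_atOrBelowLayer ha
  have hab' : a ≠ b := by
    rintro rfl
    exact hne (hD.eq_of_mem (mem_of_getLast? htop) ha')
  exact badlyPlaced_relocate htop hne ha' (lt_of_le_of_ne hab hab')

end LayerIntact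

section Counting

variable {P Q : Config B S → Move S → Prop}

lemma countMoves_cons_of_pos {D : Config B S} {m : Move S} (ms : List (Move S))
    (h : P D m) : countMoves P D (m :: ms) = countMoves P (applyMove D m) ms + 1 := by
  simp only [countMoves, if_pos h]
  omega

lemma countMoves_le_cons (D : Config B S) (m : Move S) (ms : List (Move S)) :
    countMoves P (applyMove D m) ms ≤ countMoves P D (m :: ms) :=
  Nat.le_add_left _ _

lemma countMoves_append (D : Config B S) (ms₁ ms₂ : List (Move S)) :
    countMoves P D (ms₁ ++ ms₂) = countMoves P D ms₁ + countMoves P (play D ms₁) ms₂ := by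
  induction ms₁ generalizing D with
  | nil => simp [countMoves, play]
  | cons m ms ih =>
    simp only [cons_append, countMoves, ih, play]
    omega

lemma countMoves_le_append (D : Config B S) (ms₁ ms₂ : List (Move S)) :
    countMoves P (play D ms₁) ms₂ ≤ countMoves P D (ms₁ ++ ms₂) := by
  rw [countMoves_append]
  exact Nat.le_add_left _ _

lemma countMoves_mono (h : ∀ D m, P D m → Q D m) (D : Config B S) (ms : List (Move S)) :
    countMoves P D ms ≤ countMoves Q D ms := by
  induction ms generalizing D with
  | nil => exact le_rfl
  | cons m ms ih =>
    simp only [countMoves]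
    have := ih (applyMove D m)
    split_ifs with hP hQ hQ
    all_goals first | omega | exact absurd (h D m hP) hQ

lemma Feasible.exists_first {Inv : Config B S → Prop}
    (hstep : ∀ D m, Inv D → Enabled D m → ¬ P D m → Inv (applyMove D m))
    (hend : ∀ D, Inv D → ∃ s, D s ≠ []) {D : Config B S} {ms : List (Move S)}
    (hF : Feasible D ms) (hD : Inv D) :
    ∃ ms₁ m ms₂, ms = ms₁ ++ m :: ms₂ ∧ Inv (play D ms₁) ∧ Enabled (play D ms₁) m ∧
      P (play D ms₁) m ∧ Feasible (applyMove (play D ms₁) m) ms₂ := by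
  induction ms generalizing D with
  | nil =>
    obtain ⟨s, hs⟩ := hend D hD
    exact absurd (hF.2 s) hs
  | cons m ms ih =>
    have hF' : Feasible (applyMove D m) ms := ⟨hF.1.2, hF.2⟩
    by_cases hP : P D m
    · exact ⟨[], m, ms, rfl, hD, hF.1.1, hP, hF'⟩
    · obtain ⟨ms₁, m', ms₂, rfl, h⟩ := ih hF' (hstep D m hD hF.1.1 hP)
      exact ⟨m :: ms₁, m', ms₂, rfl, h⟩

lemma Feasible.one_le_countMoves {Inv : Config B S → Prop}
    (hstep : ∀ D m, Inv D → Enabled D m → ¬ P D m → Inv (applyMove D m))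
    (hend : ∀ D, Inv D → ∃ s, D s ≠ []) {D : Config B S} {ms : List (Move S)}
    (hF : Feasible D ms) (hD : Inv D) : 1 ≤ countMoves P D ms := by
  obtain ⟨ms₁, m, ms₂, rfl, -, -, hP, -⟩ := hF.exists_first hstep hend hD
  rw [countMoves_append, countMoves_cons_of_pos ms₂ hP]
  omega

end Counting

lemma one_le_countMoves_relocNonBGIn {C : Config B S} {V : Set (Fin B)} (hC : IsConfig C)
    (hV : P5 C V) {D : Config B S} {ms : List (Move S)} (hF : Feasible D ms)
    (hD : AtMostOnce D) (hI : LayerIntact C V D) : 1 ≤ countMoves (RelocNonBGIn V) D ms :=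
  hF.one_le_countMoves (Inv := fun D => AtMostOnce D ∧ LayerIntact C V D)
    (fun _ m ⟨hD, hI⟩ hE hnot => ⟨hD.applyMove m, hI.applyMove hV hE
      fun ⟨v, hv, hmv⟩ => hnot ⟨v, hv, hmv, hI.not_mTypeOf_BG hC hV hD hv hmv⟩⟩)
    (fun _ ⟨_, hI⟩ => hI.exists_ne_nil hV) ⟨hD, hI⟩

/-- A badly placed block cannot be retrieved, and only a BG move makes it well placed. -/
lemma one_le_countMoves_BG {D : Config B S} {b : Fin B} {ms : List (Move S)}
    (hF : Feasible D ms) (hD : AtMostOnce D) (hbp : BadlyPlaced D b) :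
    1 ≤ countMoves (RelocTypeIn .BG {b}) D ms :=
  hF.one_le_countMoves (Inv := fun D => AtMostOnce D ∧ BadlyPlaced D b)
    (fun D m ⟨hD, hbp⟩ hE hnot => ⟨hD.applyMove m, by
      by_cases hmv : MovedBlock D m b
      · by_contra hwp
        exact hnot ⟨b, rfl, hmv, hbp, hwp⟩
      · exact hbp.applyMove hD hE hmv⟩)
    (fun _ ⟨_, s, _, _, hbelow⟩ => ⟨s, ne_nil_of_mem hbelow.right_mem⟩) ⟨hD, hbp⟩

lemma two_le_countMoves_relocNonBGIn_union {C D : Config B S} {V W : Set (Fin B)}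
    (hC : IsConfig C) (hV : P5 C V) (hW : P5 C W) (hD : AtMostOnce D)
    (hIV : LayerIntact C V D) (hIW : LayerIntact C W D) {m : Move S} {ms : List (Move S)}
    (hE : Enabled D m) (hF : Feasible (applyMove D m) ms) {v : Fin B} (hv : v ∈ V)
    (hvW : v ∉ W) (hmv : MovedBlock D m v) :
    2 ≤ countMoves (RelocNonBGIn (V ∪ W)) D (m :: ms) := by
  have hIW' : LayerIntact C W (applyMove D m) :=
    hIW.applyMove hW hE fun ⟨u, hu, hmu⟩ => hvW (hmu.unique hmv ▸ hu)
  have htail := (one_le_countMoves_relocNonBGIn hC hW hF (hD.applyMove m) hIW').trans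
    (countMoves_mono (Q := RelocNonBGIn (V ∪ W))
      (fun _ _ ⟨u, hu, h⟩ => ⟨u, .inr hu, h⟩) _ ms)
  rw [countMoves_cons_of_pos ms ⟨v, .inl hv, hmv, hIV.not_mTypeOf_BG hC hV hD hv hmv⟩]
  omega

lemma one_le_countMoves_GB_and_BG {C D : Config B S} {V : Set (Fin B)} (hC : IsConfig C)
    (hI : LayerIntact C V D) (hD : AtMostOnce D) {b : Fin B} (hb : b ∈ V)
    (hwp : ¬ BadlyPlaced C b) (hbound : ∀ s, ∃ a, AtOrBelowLayer C V s a ∧ a ≤ b)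
    {m : Move S} {ms : List (Move S)} (hmv : MovedBlock D m b)
    (hF : Feasible (applyMove D m) ms) :
    1 ≤ countMoves (RelocTypeIn .GB {b}) D (m :: ms) ∧
      1 ≤ countMoves (RelocTypeIn .BG {b}) D (m :: ms) := by
  have hGB := hI.mTypeOf_GB hC hD hb hwp hbound hmv
  refine ⟨?_, (one_le_countMoves_BG hF (hD.applyMove m) hGB.2).trans (countMoves_le_cons _ _ _)⟩
  rw [countMoves_cons_of_pos ms ⟨b, rfl, hmv, hGB⟩]
  omega

theorem brp_property7_general {B S : ℕ}
    (C : Config B S) (hC : IsConfig C)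
    (V₁ V₂ : Set (Fin B)) (bstar : Fin B) (h7 : P7 C V₁ V₂ bstar) :
    ∀ ms, Feasible C ms →
      2 ≤ countMoves (RelocNonBGIn (V₁ ∪ V₂)) C ms ∨
      (1 ≤ countMoves (RelocTypeIn MType.GB {bstar}) C ms ∧
       1 ≤ countMoves (RelocTypeIn MType.BG {bstar}) C ms) := by
  obtain ⟨hcap, hwp, -, hP₁, hP₂, hbound, -⟩ := h7
  intro ms hF
  obtain ⟨ms₁, m, ms₂, rfl, ⟨hD, hI₁, hI₂⟩, hE, ⟨v, hv, hmv⟩, hF'⟩ :=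
    hF.exists_first (P := RelocIn (V₁ ∪ V₂))
      (Inv := fun D => AtMostOnce D ∧ LayerIntact C V₁ D ∧ LayerIntact C V₂ D)
      (fun _ m ⟨hD, hI₁, hI₂⟩ hE hnot => ⟨hD.applyMove m,
        hI₁.applyMove hP₁ hE fun ⟨v, hv, h⟩ => hnot ⟨v, .inl hv, h⟩,
        hI₂.applyMove hP₂ hE fun ⟨v, hv, h⟩ => hnot ⟨v, .inr hv, h⟩⟩)
      (fun _ ⟨_, hI₁, _⟩ => hI₁.exists_ne_nil hP₁)
      ⟨hC.atMostOnce, layerIntact_self C V₁, layerIntact_self C V₂⟩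
  by_cases h₁ : v ∈ V₁ <;> by_cases h₂ : v ∈ V₂
  · obtain rfl : v = bstar := hcap.subset ⟨h₁, h₂⟩
    exact .inr ((one_le_countMoves_GB_and_BG hC hI₁ hD h₁ hwp hbound hmv hF').imp
      (·.trans (countMoves_le_append _ _ _)) (·.trans (countMoves_le_append _ _ _)))
  · exact .inl ((two_le_countMoves_relocNonBGIn_union hC hP₁ hP₂ hD hI₁ hI₂ hE hF' h₁ h₂
      hmv).trans (countMoves_le_append _ _ _))
  · rw [Set.union_comm]
    exact .inl ((two_le_countMoves_relocNonBGIn_union hC hP₂ hP₁ hD hI₂ hI₁ hE hF' h₂ h₁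
      hmv).trans (countMoves_le_append _ _ _))
  · exact absurd hv (by simp [h₁, h₂])

/-- Theorem 4, Property 7: if `V₁` (upper) and `V₂` (lower) are
virtual layers sharing exactly the well-placed block `bstar` and satisfying the
conditions of Property 7, then every feasible move sequence either contains at
least 2 non-BG relocations of blocks of `V₁ ∪ V₂`, or contains at least one GB
relocation of `bstar` and at least one BG relocation of `bstar`. -/
theorem brp_property7 {B S : ℕ} (hS : 2 ≤ S) (hB : 1 ≤ B)
    (C : Config B S) (hC : IsConfig C) (hne : ∀ s, C s ≠ [])
    (V₁ V₂ : Set (Fin B)) (bstar : Fin B) (h7 : P7 C V₁ V₂ bstar) :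
    ∀ ms, Feasible C ms →
      2 ≤ countMoves (RelocNonBGIn (V₁ ∪ V₂)) C ms ∨
      (1 ≤ countMoves (RelocTypeIn MType.GB {bstar}) C ms ∧
       1 ≤ countMoves (RelocTypeIn MType.BG {bstar}) C ms) :=
  brp_property7_general C hC V₁ V₂ bstar h7
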